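/- arXiv:1405.0317 — 2 statements merged into one kernel-verified Lean document; each statement's English description precedes it below -/
import Mathlib

section
/- Let h > 0, A > 0, B > 0, and let (ζ_i)_{i ≥ 0} be independent random variables taking values in [0, M] with common mean E[ζ_i] = m > 0, where hMA/(B+1) ≤ 1 and hAm > 1. Define S[τ] = Σ_{j=1}^{τ−1} ∏_{i=0}^{j−1} (1 − h ζ_i A/(B + i)). Then sup_τ E[S[τ]] < ∞, and the increasing sequence S[τ] converges almost surely to a finite limit S = Σ_{j=1}^∞ ∏_{i=0}^{j−1} (1 − h ζ_i A/(B + i)) < ∞. -/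
open scoped BigOperators
open MeasureTheory ProbabilityTheory Filter

open Finset Topology

/-!
Write `Y i = 1 - h ζ_i A / (B + i)`. For `i ≥ 1` the factors lie in `[0, 1]`, but `Y 0` may be
negative, so it is only bounded in absolute value by a constant `K`. Independence turns the
expectation of `|∏_{i ≤ j} Y i| ≤ K ∏_{1 ≤ i ≤ j} Y i` into `K ∏_{i<j} (1 - p/(B + 1 + i))` with
`p = hAm`, and `1 - p/x ≤ (x/(x+1))^p` telescopes this to `K ((B+1)/(B+1+j))^p`, summable since
`p > 1`. Summable `L¹` norms give both the bound on expectations and almost sure absolute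
convergence.
-/

lemma one_sub_div_le_rpow_div_add_one {p x : ℝ} (hp : 0 ≤ p) (hx : 0 < x) :
    1 - p / x ≤ (x / (x + 1)) ^ p := by
  have hlog : -(1 / x) ≤ Real.log (x / (x + 1)) := by
    have := Real.one_sub_inv_le_log_of_pos (show 0 < x / (x + 1) by positivity)
    rw [inv_div] at this
    convert this using 1
    field_simp
    ring
  calc 1 - p / x = -(p / x) + 1 := by ring
    _ ≤ Real.exp (-(p / x)) := Real.add_one_le_exp _
    _ ≤ Real.exp (Real.log (x / (x + 1)) * p) := by
        gcongr
        calc -(p / x) = -(1 / x) * p := by ring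
          _ ≤ _ := mul_le_mul_of_nonneg_right hlog hp
    _ = (x / (x + 1)) ^ p := (Real.rpow_def_of_pos (by positivity) p).symm

lemma prod_range_one_sub_div_le_rpow {p C : ℝ} (hp : 0 ≤ p) (hpC : p ≤ C) (hC : 0 < C) (j : ℕ) :
    ∏ i ∈ range j, (1 - p / (C + i)) ≤ (C / (C + j)) ^ p := by
  induction j with
  | zero => simp [div_self hC.ne']
  | succ j ih =>
    have hCj : 0 < C + j := by positivity
    have hfac : 0 ≤ 1 - p / (C + j) := by
      rw [sub_nonneg, div_le_one hCj]; linarith [(Nat.cast_nonneg j : (0:ℝ) ≤ j)]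
    calc ∏ i ∈ range (j + 1), (1 - p / (C + i))
        = (∏ i ∈ range j, (1 - p / (C + i))) * (1 - p / (C + j)) := prod_range_succ _ _
      _ ≤ (C / (C + j)) ^ p * ((C + j) / (C + j + 1)) ^ p :=
          mul_le_mul ih (one_sub_div_le_rpow_div_add_one hp hCj) hfac (by positivity)
      _ = (C / (C + (j + 1 : ℕ))) ^ p := by
          rw [← Real.mul_rpow (by positivity) (by positivity)]
          congr 1
          push_cast
          field_simp
          ring

lemma summable_prod_range_one_sub_div {p C : ℝ} (hp : 1 < p) (hpC : p ≤ C) :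
    Summable fun j : ℕ => ∏ i ∈ range j, (1 - p / (C + i)) := by
  have hC : 0 < C := by linarith
  refine Summable.of_nonneg_of_le (fun j => prod_nonneg fun i _ => ?_)
    (fun j => (prod_range_one_sub_div_le_rpow (by linarith) hpC hC j).trans_eq ?_)
    (((Real.summable_one_div_nat_add_rpow C p).2 hp).mul_left (C ^ p))
  · rw [sub_nonneg, div_le_one (by positivity)]; linarith [(Nat.cast_nonneg i : (0:ℝ) ≤ i)]
  · rw [abs_of_pos (by positivity), Real.div_rpow hC.le (by positivity), add_comm]
    ring

lemma ProbabilityTheory.iIndepFun.integral_finset_prod {Ω ι 𝕜 : Type*} [RCLike 𝕜]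
    {mΩ : MeasurableSpace Ω} {μ : Measure Ω} {X : ι → Ω → 𝕜} (hX : iIndepFun X μ)
    (mX : ∀ i, AEStronglyMeasurable (X i) μ) (s : Finset ι) :
    ∫ ω, ∏ i ∈ s, X i ω ∂μ = ∏ i ∈ s, ∫ ω, X i ω ∂μ := by
  have := (hX.precomp Subtype.val_injective).integral_fun_prod_eq_prod_integral fun i : s => mX i
  rw [prod_coe_sort s fun i => ∫ ω, X i ω ∂μ] at this
  convert this using 3 with ω
  exact (prod_coe_sort s fun i => X i ω).symm

lemma ae_summable_of_summable_integral_norm {Ω ι E : Type*} {mΩ : MeasurableSpace Ω}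
    {μ : Measure Ω} [Countable ι] [NormedAddCommGroup E] [CompleteSpace E] {f : ι → Ω → E}
    (hf : ∀ n, Integrable (f n) μ) (hs : Summable fun n => ∫ ω, ‖f n ω‖ ∂μ) :
    ∀ᵐ ω ∂μ, Summable fun n => f n ω := by
  have hnorm := summable_norm_of_tsum_eLpNorm_ne_top le_rfl
    (fun n => (hf n).aestronglyMeasurable) ?_
  · filter_upwards [hnorm] with ω hω using hω.of_norm
  simp_rw [eLpNorm_one_eq_lintegral_enorm, ← ofReal_integral_norm_eq_lintegral_enorm (hf _)]
  rw [← ENNReal.ofReal_tsum_of_nonneg (fun n => integral_nonneg fun _ => norm_nonneg _) hs]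
  exact ENNReal.ofReal_ne_top

lemma tendsto_sum_Ico_one_of_hasSum {E : Type*} [AddCommMonoid E] [TopologicalSpace E]
    {f : ℕ → E} {a : E} (hf : HasSum (fun j => f (j + 1)) a) :
    Tendsto (fun τ => ∑ j ∈ Ico 1 τ, f j) atTop (𝓝 a) := by
  refine (hf.tendsto_sum_nat.comp (tendsto_sub_atTop_nat 1)).congr fun τ => ?_
  simp [Finset.sum_Ico_eq_sum_range, add_comm]

lemma integral_finset_sum_le_tsum_integral_norm {Ω ι : Type*} {mΩ : MeasurableSpace Ω}
    {μ : Measure Ω} {f : ι → Ω → ℝ} (hf : ∀ n, Integrable (f n) μ)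
    (hs : Summable fun n => ∫ ω, ‖f n ω‖ ∂μ) (s : Finset ι) :
    ∫ ω, ∑ j ∈ s, f j ω ∂μ ≤ ∑' j, ∫ ω, ‖f j ω‖ ∂μ := by
  rw [integral_finsetSum s fun j _ => hf j]
  calc ∑ j ∈ s, ∫ ω, f j ω ∂μ ≤ ∑ j ∈ s, ∫ ω, ‖f j ω‖ ∂μ :=
        sum_le_sum fun j _ => (Real.le_norm_self _).trans (norm_integral_le_integral_norm _)
    _ ≤ ∑' j, ∫ ω, ‖f j ω‖ ∂μ :=
        hs.sum_le_tsum s fun j _ => integral_nonneg fun _ => norm_nonneg _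

section IndependentProducts

variable {Ω : Type*} {mΩ : MeasurableSpace Ω} {P : Measure Ω} {K : ℝ}

lemma integrable_finset_prod_of_abs_le [IsFiniteMeasure P] {ι : Type*} {Y : ι → Ω → ℝ}
    (hmeas : ∀ i, AEStronglyMeasurable (Y i) P) (hbdd : ∀ i ω, |Y i ω| ≤ K) (s : Finset ι) :
    Integrable (fun ω => ∏ i ∈ s, Y i ω) P := by
  refine .of_bound (aestronglyMeasurable_fun_prod s fun i _ => hmeas i) (K ^ #s)
    (ae_of_all _ fun ω => ?_)
  rw [norm_prod, ← prod_const]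
  exact prod_le_prod (fun i _ => norm_nonneg _) fun i _ => hbdd i ω

variable {Y : ℕ → Ω → ℝ}

lemma integral_norm_prod_range_succ_le (hY : iIndepFun Y P)
    (hmeas : ∀ i, AEStronglyMeasurable (Y i) P) (hbdd : ∀ i ω, |Y i ω| ≤ K)
    (hnonneg : ∀ i ω, 0 ≤ Y (i + 1) ω) (j : ℕ) :
    ∫ ω, ‖∏ i ∈ range (j + 1), Y i ω‖ ∂P ≤ K * ∏ i ∈ range j, ∫ ω, Y (i + 1) ω ∂P := by
  have := hY.isProbabilityMeasure
  have hpoint : ∀ ω, ‖∏ i ∈ range (j + 1), Y i ω‖ ≤ K * ∏ i ∈ range j, Y (i + 1) ω := by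
    intro ω
    rw [prod_range_succ', norm_mul, Real.norm_eq_abs, Real.norm_eq_abs,
      abs_of_nonneg (prod_nonneg fun i _ => hnonneg i ω), mul_comm]
    exact mul_le_mul_of_nonneg_right (hbdd 0 ω) (prod_nonneg fun i _ => hnonneg i ω)
  calc ∫ ω, ‖∏ i ∈ range (j + 1), Y i ω‖ ∂P
      ≤ ∫ ω, K * ∏ i ∈ range j, Y (i + 1) ω ∂P :=
        integral_mono_of_nonneg (ae_of_all _ fun _ => norm_nonneg _)
          ((integrable_finset_prod_of_abs_le (fun i => hmeas (i + 1)) (fun i => hbdd (i + 1))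
            _).const_mul K) (ae_of_all _ hpoint)
    _ = K * ∏ i ∈ range j, ∫ ω, Y (i + 1) ω ∂P := by
        rw [integral_const_mul, (hY.precomp Nat.succ_injective).integral_finset_prod
          (fun i => hmeas (i + 1))]

lemma summable_integral_norm_prod_range (hY : iIndepFun Y P)
    (hmeas : ∀ i, AEStronglyMeasurable (Y i) P) (hbdd : ∀ i ω, |Y i ω| ≤ K)
    (hnonneg : ∀ i ω, 0 ≤ Y (i + 1) ω)
    (hsum : Summable fun j => ∏ i ∈ range j, ∫ ω, Y (i + 1) ω ∂P) :
    Summable fun j => ∫ ω, ‖∏ i ∈ range j, Y i ω‖ ∂P :=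
  (summable_nat_add_iff 1).1 <| (hsum.mul_left K).of_nonneg_of_le
    (fun _ => integral_nonneg fun _ => norm_nonneg _)
    (integral_norm_prod_range_succ_le hY hmeas hbdd hnonneg)

end IndependentProducts

section StepFactor

variable {h A B M x : ℝ}

lemma abs_one_sub_mul_div_le (hh : 0 ≤ h) (hA : 0 ≤ A) (hB : 0 < B) (hx : x ∈ Set.Icc 0 M)
    (i : ℕ) : |1 - h * x * A / (B + i)| ≤ 1 + h * M * A / B := by
  have ht : 0 ≤ h * x * A / (B + i) := by have := hx.1; positivity
  calc |1 - h * x * A / (B + i)| ≤ |1| + |h * x * A / (B + i)| := abs_sub _ _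
    _ = 1 + h * x * A / (B + i) := by rw [abs_one, abs_of_nonneg ht]
    _ ≤ 1 + h * M * A / B := by
        have hM : 0 ≤ M := hx.1.trans hx.2
        gcongr
        exacts [hx.2, le_add_of_nonneg_right i.cast_nonneg]

lemma one_sub_mul_div_nonneg (hh : 0 ≤ h) (hA : 0 ≤ A) (hB : 0 < B)
    (hMA : h * M * A / (B + 1) ≤ 1) (hx : x ∈ Set.Icc 0 M) (i : ℕ) :
    0 ≤ 1 - h * x * A / (B + ↑(i + 1)) := by
  rw [sub_nonneg]
  refine le_trans ?_ hMA
  have hM : 0 ≤ M := hx.1.trans hx.2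
  gcongr
  exacts [hx.2, Nat.one_le_cast.2 i.succ_pos]

end StepFactor

lemma integral_one_sub_mul_div {Ω : Type*} {mΩ : MeasurableSpace Ω} {P : Measure Ω}
    [IsProbabilityMeasure P] {X : Ω → ℝ} (hX : Integrable X P) (h A c : ℝ) :
    ∫ ω, (1 - h * X ω * A / c) ∂P = 1 - h * (∫ ω, X ω ∂P) * A / c := by
  rw [integral_sub (integrable_const 1) (((hX.const_mul h).mul_const A).div_const c),
    integral_const, probReal_univ, one_smul, integral_div, integral_mul_const, integral_const_mul]

theorem stmt11_general (h A B M m : ℝ) (hh : 0 < h) (hA : 0 < A) (hB : 0 < B)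
    (hMA : h * M * A / (B + 1) ≤ 1) (hAm : 1 < h * A * m)
    (Ω : Type*) [MeasurableSpace Ω] (P : Measure Ω) [IsProbabilityMeasure P]
    (ζ : ℕ → Ω → ℝ) (hmeas : ∀ i, Measurable (ζ i))
    (hrange : ∀ i ω, ζ i ω ∈ Set.Icc (0 : ℝ) M)
    (hmean : ∀ i, ∫ ω, ζ i ω ∂P = m)
    (hindep : iIndepFun ζ P) :
    BddAbove (Set.range fun τ : ℕ =>
      ∫ ω, (∑ j ∈ Finset.Ico 1 τ,
        ∏ i ∈ Finset.range j, (1 - h * ζ i ω * A / (B + (i : ℝ)))) ∂P) ∧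
    ∀ᵐ ω ∂P,
      (Summable fun j : ℕ =>
        ∏ i ∈ Finset.range (j + 1), (1 - h * ζ i ω * A / (B + (i : ℝ)))) ∧
      Tendsto (fun τ : ℕ => ∑ j ∈ Finset.Ico 1 τ,
          ∏ i ∈ Finset.range j, (1 - h * ζ i ω * A / (B + (i : ℝ))))
        atTop
        (nhds (∑' j : ℕ,
          ∏ i ∈ Finset.range (j + 1), (1 - h * ζ i ω * A / (B + (i : ℝ))))) := by
  set Y : ℕ → Ω → ℝ := fun i ω => 1 - h * ζ i ω * A / (B + i)
  have hYindep : iIndepFun Y P :=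
    hindep.comp (fun i x => 1 - h * x * A / (B + i)) fun i => by fun_prop
  have hYmeas : ∀ i, AEStronglyMeasurable (Y i) P := fun i => by
    have := hmeas i
    fun_prop
  have hYbdd : ∀ i ω, |Y i ω| ≤ 1 + h * M * A / B := fun i ω =>
    abs_one_sub_mul_div_le hh.le hA.le hB (hrange i ω) i
  have hYnonneg : ∀ i ω, 0 ≤ Y (i + 1) ω := fun i ω =>
    one_sub_mul_div_nonneg hh.le hA.le hB hMA (hrange (i + 1) ω) i
  have hYmean : ∀ i : ℕ, ∫ ω, Y (i + 1) ω ∂P = 1 - h * A * m / (B + 1 + i) := fun i => by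
    rw [integral_one_sub_mul_div (.of_mem_Icc 0 M (hmeas _).aemeasurable
      (ae_of_all _ (hrange _))), hmean]
    push_cast
    ring
  have hpC : h * A * m ≤ B + 1 := by
    have := hYmean 0 ▸ integral_nonneg (hYnonneg 0)
    rwa [Nat.cast_zero, add_zero, sub_nonneg, div_le_one (by positivity)] at this
  have hnorm : Summable fun j => ∫ ω, ‖∏ i ∈ range j, Y i ω‖ ∂P :=
    summable_integral_norm_prod_range hYindep hYmeas hYbdd hYnonneg
      (by simpa only [hYmean] using summable_prod_range_one_sub_div hAm hpC)
  have hint := integrable_finset_prod_of_abs_le hYmeas hYbdd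
  refine ⟨⟨_, Set.forall_mem_range.2 fun τ =>
    integral_finset_sum_le_tsum_integral_norm (fun j => hint _) hnorm (Ico 1 τ)⟩, ?_⟩
  filter_upwards [ae_summable_of_summable_integral_norm (fun j => hint _)
    ((summable_nat_add_iff 1).2 hnorm)] with ω hω
  exact ⟨hω, tendsto_sum_Ico_one_of_hasSum hω.hasSum⟩

/-- Linear case: for independent random variables `ζ_i ∈ [0, M]` with common
mean `m > 0`, the random series `S[τ] = Σ_{j=1}^{τ−1} Π_{i=0}^{j−1} (1 − hζ_i A/(B+i))`
has uniformly bounded expectations and converges almost surely to a finite limit. -/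
theorem stmt11 (h A B M m : ℝ) (hh : 0 < h) (hA : 0 < A) (hB : 0 < B) (hm : 0 < m)
    (hMA : h * M * A / (B + 1) ≤ 1) (hAm : 1 < h * A * m)
    (Ω : Type*) [MeasurableSpace Ω] (P : Measure Ω) [IsProbabilityMeasure P]
    (ζ : ℕ → Ω → ℝ) (hmeas : ∀ i, Measurable (ζ i))
    (hrange : ∀ i ω, ζ i ω ∈ Set.Icc (0 : ℝ) M)
    (hmean : ∀ i, ∫ ω, ζ i ω ∂P = m)
    (hindep : iIndepFun ζ P) :
    BddAbove (Set.range fun τ : ℕ =>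
      ∫ ω, (∑ j ∈ Finset.Ico 1 τ,
        ∏ i ∈ Finset.range j, (1 - h * ζ i ω * A / (B + (i : ℝ)))) ∂P) ∧
    ∀ᵐ ω ∂P,
      (Summable fun j : ℕ =>
        ∏ i ∈ Finset.range (j + 1), (1 - h * ζ i ω * A / (B + (i : ℝ)))) ∧
      Tendsto (fun τ : ℕ => ∑ j ∈ Finset.Ico 1 τ,
          ∏ i ∈ Finset.range j, (1 - h * ζ i ω * A / (B + (i : ℝ))))
        atTop
        (nhds (∑' j : ℕ,
          ∏ i ∈ Finset.range (j + 1), (1 - h * ζ i ω * A / (B + (i : ℝ))))) :=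
  stmt11_general h A B M m hh hA hB hMA hAm Ω P ζ hmeas hrange hmean hindep
end

section
/- Consider the Cucker–Smale system with random failures: k ≥ 2 agents with positions X_i(t) ∈ ℝ³ and velocities V_i(t) ∈ ℝ³ evolving by X_i(t+h) = X_i(t) + h V_i(t) and V_i(t+h) = V_i(t) + h Σ_{j=1}^k a_{ij}(t)(V_j(t) − V_i(t)), where 0 < h ≤ 1/k and a_{ij}(t) = ζ^{ij}_t (1 + ‖X_i(t) − X_j(t)‖)^{−α} for i ≠ j, with symmetric ζ^{ij}_t = ζ^{ji}_t i.i.d. Bernoulli(1−λ), λ ∈ (0,1), 0 ≤ α < 1. Let v[t] = (V_1(th) − V̄(0), …, V_k(th) − V̄(0)) denote the relative velocity, where V̄(0) = (1/k)Σ_j V_j(0). Then almost surely Σ_{t=0}^∞ ‖v[t]‖ < ∞, where ‖·‖ is the Euclidean norm on (ℝ³)^k. -/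
/-!
The velocity update is multiplication by a symmetric doubly stochastic matrix, so the mean
velocity is conserved and the squared deviation from it never increases. Hence velocities stay
bounded, positions spread at most linearly in time, and an active link at time `t` carries weight
at least `(C * (1 + t)) ^ (-α)`. At a step where all links are active the deviation therefore
contracts by the factor `1 - k h (C * (1 + t)) ^ (-α)`. Such steps are independent events of a
fixed positive probability `p`, so the expected product of the contraction factors up to time `t`
is at most `exp (-c t ^ (1 - α))`, which is summable; the products, and with them the deviations,
are then almost surely summable.
-/

open MeasureTheory ProbabilityTheory Filter Finset

section Averaging

variable {ι E : Type*} [Fintype ι] [NormedAddCommGroup E]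

def sqDev (c : E) (v : ι → E) : ℝ := ∑ i, ‖v i - c‖ ^ 2

theorem norm_sub_le_sqrt_sqDev (c : E) (v : ι → E) (i : ι) : ‖v i - c‖ ≤ √(sqDev c v) :=
  Real.le_sqrt_of_sq_le <| single_le_sum (f := fun i => ‖v i - c‖ ^ 2)
    (fun _ _ => sq_nonneg _) (mem_univ i)

theorem norm_sub_le_two_mul_sqrt_sqDev (c : E) (v : ι → E) (i j : ι) :
    ‖v i - v j‖ ≤ 2 * √(sqDev c v) := by
  calc ‖v i - v j‖ = ‖(v i - c) - (v j - c)‖ := by rw [sub_sub_sub_cancel_right]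
    _ ≤ ‖v i - c‖ + ‖v j - c‖ := norm_sub_le _ _
    _ ≤ 2 * √(sqDev c v) := by
      linarith [norm_sub_le_sqrt_sqDev c v i, norm_sub_le_sqrt_sqDev c v j]

variable [NormedSpace ℝ E]

theorem sum_norm_sum_smul_sq_le {M : ι → ι → ℝ} {s : ℝ} (hM : ∀ i j, 0 ≤ M i j)
    (hrow : ∀ i, ∑ j, M i j = s) (hcol : ∀ j, ∑ i, M i j = s) (u : ι → E) :
    ∑ i, ‖∑ j, M i j • u j‖ ^ 2 ≤ s ^ 2 * ∑ j, ‖u j‖ ^ 2 := by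
  have hrow_sq : ∀ i, ‖∑ j, M i j • u j‖ ^ 2 ≤ s * ∑ j, M i j * ‖u j‖ ^ 2 := fun i => by
    have hnorm : ‖∑ j, M i j • u j‖ ≤ ∑ j, M i j * ‖u j‖ :=
      (norm_sum_le _ _).trans_eq <| sum_congr rfl fun j _ => by
        rw [norm_smul, Real.norm_of_nonneg (hM i j)]
    have hCS := sum_sq_le_sum_mul_sum_of_sq_le_mul univ (fun j _ => hM i j)
      (fun j _ => mul_nonneg (hM i j) (sq_nonneg ‖u j‖)) (r := fun j => M i j * ‖u j‖)
      fun j _ => le_of_eq (by ring)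
    rw [hrow] at hCS
    exact (pow_le_pow_left₀ (norm_nonneg _) hnorm 2).trans hCS
  calc ∑ i, ‖∑ j, M i j • u j‖ ^ 2 ≤ ∑ i, s * ∑ j, M i j * ‖u j‖ ^ 2 :=
        sum_le_sum fun i _ => hrow_sq i
    _ = s * ∑ j, (∑ i, M i j) * ‖u j‖ ^ 2 := by simp_rw [← mul_sum, sum_mul]; rw [sum_comm]
    _ = s ^ 2 * ∑ j, ‖u j‖ ^ 2 := by simp_rw [hcol, ← mul_sum]; ring

theorem sum_sub_mean_eq_zero (v : ι → E) :
    ∑ i, (v i - (Fintype.card ι : ℝ)⁻¹ • ∑ j, v j) = 0 := by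
  rcases isEmpty_or_nonempty ι with hι | hι
  · simp
  rw [sum_sub_distrib, sum_const, card_univ, ← Nat.cast_smul_eq_nsmul ℝ, smul_smul,
    mul_inv_cancel₀ (by positivity), one_smul, sub_self]

def csStep (h : ℝ) (a : ι → ι → ℝ) (v : ι → E) (i : ι) : E :=
  v i + h • ∑ j, a i j • (v j - v i)

variable {h : ℝ} {a : ι → ι → ℝ}

section Matrix

variable [DecidableEq ι]

/-- The matrix of `csStep h a` (see `csStep_sub_eq_sum`); it is doubly stochastic when `a` is
symmetric, whatever its diagonal. -/
def csMatrix (h : ℝ) (a : ι → ι → ℝ) (i j : ι) : ℝ :=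
  h * a i j + if i = j then 1 - h * ∑ l, a i l else 0

theorem sum_csMatrix_row (i : ι) : ∑ j, csMatrix h a i j = 1 := by
  simp [csMatrix, sum_add_distrib, ← mul_sum]

theorem sum_csMatrix_col (ha : ∀ i j, a i j = a j i) (j : ι) : ∑ i, csMatrix h a i j = 1 := by
  simp [csMatrix, sum_add_distrib, ← mul_sum, ha _ j]

theorem csStep_sub_eq_sum (v : ι → E) (c : E) (i : ι) :
    csStep h a v i - c = ∑ j, csMatrix h a i j • (v j - c) := by
  have hshift : ∑ j, a i j • (v j - v i) = ∑ j, a i j • (v j - c) - (∑ j, a i j) • (v i - c) := by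
    rw [sum_smul, ← sum_sub_distrib]
    exact sum_congr rfl fun j _ => by rw [← smul_sub, sub_sub_sub_cancel_right]
  have hdiag : ∑ j, csMatrix h a i j • (v j - c)
      = h • ∑ j, a i j • (v j - c) + (1 - h * ∑ l, a i l) • (v i - c) := by
    simp only [csMatrix, add_smul, sum_add_distrib, ite_smul, zero_smul, sum_ite_eq, mem_univ,
      if_true, mul_smul, ← smul_sum]
  rw [hdiag, csStep, hshift]
  simp only [smul_sub, sub_smul, one_smul, mul_smul]
  abel

theorem le_csMatrix_sub (h0 : 0 ≤ h) (hcard : h * Fintype.card ι ≤ 1)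
    (ha1 : ∀ i j, a i j ≤ 1) {b : ℝ} (hb : ∀ i j, i ≠ j → b ≤ a i j)
    (hb1 : b ≤ 1) (i j : ι) : h * b ≤ csMatrix h a i j := by
  rcases eq_or_ne i j with rfl | hij
  · have hoff : ∑ l ∈ univ.erase i, a i l ≤ (univ.erase i).card := by
      simpa using sum_le_sum fun l (_ : l ∈ univ.erase i) => ha1 i l
    have hcard' : ((univ.erase i).card : ℝ) + 1 = Fintype.card ι := by
      exact_mod_cast card_erase_add_one (mem_univ i)
    rw [csMatrix, if_pos rfl, ← add_sum_erase _ _ (mem_univ i)]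
    nlinarith
  · rw [csMatrix, if_neg hij, add_zero]
    exact mul_le_mul_of_nonneg_left (hb i j hij) h0

end Matrix

theorem sum_csStep (ha : ∀ i j, a i j = a j i) (v : ι → E) :
    ∑ i, csStep h a v i = ∑ i, v i := by
  classical
  have hstep : ∀ i, csStep h a v i = ∑ j, csMatrix h a i j • v j := fun i => by
    simpa using csStep_sub_eq_sum v 0 i
  simp_rw [hstep]
  rw [sum_comm]
  simp_rw [← sum_smul, sum_csMatrix_col ha, one_smul]

theorem sqDev_csStep_le (h0 : 0 ≤ h) (hcard : h * Fintype.card ι ≤ 1)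
    (ha0 : ∀ i j, 0 ≤ a i j) (ha1 : ∀ i j, a i j ≤ 1) (ha : ∀ i j, a i j = a j i)
    (c : E) (v : ι → E) : sqDev c (csStep h a v) ≤ sqDev c v := by
  classical
  have hM : ∀ i j, 0 ≤ csMatrix h a i j := by
    simpa using le_csMatrix_sub h0 hcard ha1 (fun i j _ => ha0 i j) zero_le_one
  simpa [sqDev, csStep_sub_eq_sum] using
    sum_norm_sum_smul_sq_le hM sum_csMatrix_row (sum_csMatrix_col ha) (fun j => v j - c)

theorem sqDev_csStep_le_mul (h0 : 0 ≤ h) (hcard : h * Fintype.card ι ≤ 1)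
    (ha1 : ∀ i j, a i j ≤ 1) (ha : ∀ i j, a i j = a j i) {b : ℝ}
    (hb : ∀ i j, i ≠ j → b ≤ a i j) (hb1 : b ≤ 1) {c : E} {v : ι → E}
    (hc : ∑ i, (v i - c) = 0) :
    sqDev c (csStep h a v) ≤ (1 - Fintype.card ι * h * b) ^ 2 * sqDev c v := by
  classical
  -- since `∑ j, (v j - c) = 0`, lowering every entry by `h * b` does not change the step
  set R : ι → ι → ℝ := fun i j => csMatrix h a i j - h * b
  have hR : ∀ i j, 0 ≤ R i j := fun i j => sub_nonneg.2 (le_csMatrix_sub h0 hcard ha1 hb hb1 i j)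
  have hstep : ∀ i, csStep h a v i - c = ∑ j, R i j • (v j - c) := fun i => by
    rw [csStep_sub_eq_sum]
    simp only [R, sub_smul, sum_sub_distrib]
    rw [← smul_sum, hc, smul_zero, sub_zero]
  have hsum : ∀ i, ∑ j, (csMatrix h a i j - h * b) = 1 - Fintype.card ι * h * b := fun i => by
    simp [sum_sub_distrib, sum_csMatrix_row]; ring
  have hsum' : ∀ j, ∑ i, (csMatrix h a i j - h * b) = 1 - Fintype.card ι * h * b := fun j => by
    simp [sum_sub_distrib, sum_csMatrix_col ha]; ring
  simpa only [sqDev, hstep] using sum_norm_sum_smul_sq_le hR hsum hsum' (fun j => v j - c)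

end Averaging

section Trajectory

variable {ι E : Type*} [Fintype ι] [NormedAddCommGroup E] [NormedSpace ℝ E]

noncomputable def csWeight (α : ℝ) (ζ : ι → ι → ℝ) (x : ι → E) (i j : ι) : ℝ :=
  ζ i j * (1 + ‖x i - x j‖) ^ (-α)

def allLinks [LinearOrder ι] (ζ : ι → ι → ℝ) : ℝ :=
  ∏ p : {p : ι × ι // p.1 < p.2}, ζ p.1.1 p.1.2

theorem allLinks_eq_zero_or_eq_one [LinearOrder ι] {ζ : ι → ι → ℝ}
    (hζ : ∀ i j, ζ i j = 0 ∨ ζ i j = 1) : allLinks ζ = 0 ∨ allLinks ζ = 1 :=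
  prod_induction _ (fun x : ℝ => x = 0 ∨ x = 1)
    (by rintro _ _ (rfl | rfl) (rfl | rfl) <;> simp) (by simp) fun p _ => hζ _ _

theorem eq_one_of_allLinks_eq_one [LinearOrder ι] {ζ : ι → ι → ℝ}
    (hζ : ∀ i j, ζ i j = 0 ∨ ζ i j = 1) (hsymm : ∀ i j, ζ i j = ζ j i)
    (h1 : allLinks ζ = 1) {i j : ι} (hij : i ≠ j) : ζ i j = 1 := by
  wlog hlt : i < j generalizing i j
  · rw [hsymm]; exact this hij.symm (hij.lt_or_gt.resolve_left hlt)
  refine (hζ i j).resolve_left fun h0 => ?_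
  have : allLinks ζ = 0 := prod_eq_zero (mem_univ (⟨(i, j), hlt⟩ : {p : ι × ι // p.1 < p.2})) h0
  simp [this] at h1

structure CSTrajectory (h α : ℝ) (ζ : ℕ → ι → ι → ℝ) (X V : ℕ → ι → E) : Prop where
  step_nonneg : 0 ≤ h
  step_mul_card_le : h * Fintype.card ι ≤ 1
  exponent_nonneg : 0 ≤ α
  link_eq_zero_or_eq_one : ∀ t i j, ζ t i j = 0 ∨ ζ t i j = 1
  link_symm : ∀ t i j, ζ t i j = ζ t j i
  pos_succ : ∀ t i, X (t + 1) i = X t i + h • V t i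
  vel_succ : ∀ t, V (t + 1) = csStep h (csWeight α (ζ t) (X t)) (V t)

namespace CSTrajectory

variable {h α : ℝ} {ζ : ℕ → ι → ι → ℝ} {X V : ℕ → ι → E}

theorem weight_nonneg (hT : CSTrajectory h α ζ X V) (t : ℕ) (i j : ι) :
    0 ≤ csWeight α (ζ t) (X t) i j := by
  have : 0 ≤ ζ t i j := by rcases hT.link_eq_zero_or_eq_one t i j with h | h <;> simp [h]
  unfold csWeight; positivity

theorem weight_le_one (hT : CSTrajectory h α ζ X V) (t : ℕ) (i j : ι) :
    csWeight α (ζ t) (X t) i j ≤ 1 := by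
  have hdecay : (1 + ‖X t i - X t j‖) ^ (-α) ≤ 1 :=
    Real.rpow_le_one_of_one_le_of_nonpos (by simp) (neg_nonpos.2 hT.exponent_nonneg)
  rcases hT.link_eq_zero_or_eq_one t i j with h | h <;> simp [csWeight, h, hdecay]

theorem weight_symm (hT : CSTrajectory h α ζ X V) (t : ℕ) (i j : ι) :
    csWeight α (ζ t) (X t) i j = csWeight α (ζ t) (X t) j i := by
  rw [csWeight, csWeight, hT.link_symm, norm_sub_rev]

theorem sum_vel (hT : CSTrajectory h α ζ X V) (t : ℕ) : ∑ i, V t i = ∑ i, V 0 i := by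
  induction t with
  | zero => rfl
  | succ t ih => rw [hT.vel_succ, sum_csStep (hT.weight_symm t), ih]

theorem sqDev_vel_succ_le (hT : CSTrajectory h α ζ X V) (c : E) (t : ℕ) :
    sqDev c (V (t + 1)) ≤ sqDev c (V t) := by
  rw [hT.vel_succ]
  exact sqDev_csStep_le hT.step_nonneg hT.step_mul_card_le (hT.weight_nonneg t)
    (hT.weight_le_one t) (hT.weight_symm t) c _

theorem sqDev_vel_le (hT : CSTrajectory h α ζ X V) (c : E) (t : ℕ) :
    sqDev c (V t) ≤ sqDev c (V 0) :=
  antitone_nat_of_succ_le (f := fun t => sqDev c (V t)) (hT.sqDev_vel_succ_le c) (Nat.zero_le t)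

theorem norm_pos_sub_le (hT : CSTrajectory h α ζ X V) (c : E) (t : ℕ) (i j : ι) :
    ‖X t i - X t j‖ ≤ ‖X 0 i - X 0 j‖ + t * (2 * h * √(sqDev c (V 0))) := by
  induction t with
  | zero => simp
  | succ t ih =>
    have hvel : ‖h • (V t i - V t j)‖ ≤ 2 * h * √(sqDev c (V 0)) := by
      have h0 := hT.step_nonneg
      calc ‖h • (V t i - V t j)‖ = h * ‖V t i - V t j‖ := by
            rw [norm_smul, Real.norm_of_nonneg h0]
        _ ≤ h * (2 * √(sqDev c (V t))) := by gcongr; exact norm_sub_le_two_mul_sqrt_sqDev c _ i j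
        _ ≤ h * (2 * √(sqDev c (V 0))) := by gcongr; exact hT.sqDev_vel_le c t
        _ = 2 * h * √(sqDev c (V 0)) := by ring
    calc ‖X (t + 1) i - X (t + 1) j‖ = ‖(X t i - X t j) + h • (V t i - V t j)‖ := by
          rw [hT.pos_succ, hT.pos_succ, smul_sub]; abel_nf
      _ ≤ ‖X t i - X t j‖ + ‖h • (V t i - V t j)‖ := norm_add_le _ _
      _ ≤ _ := by push_cast; linarith

theorem contraction_factor_nonneg [LinearOrder ι] (hT : CSTrajectory h α ζ X V) {C : ℝ}
    (hC1 : 1 ≤ C) (t : ℕ) :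
    0 ≤ 1 - Fintype.card ι * h * C ^ (-α) * (1 + t) ^ (-α) * allLinks (ζ t) := by
  have hle : ∀ x : ℝ, 1 ≤ x → x ^ (-α) ≤ 1 := fun x hx =>
    Real.rpow_le_one_of_one_le_of_nonpos hx (neg_nonpos.2 hT.exponent_nonneg)
  have hY : 0 ≤ allLinks (ζ t) ∧ allLinks (ζ t) ≤ 1 := by
    rcases allLinks_eq_zero_or_eq_one (hT.link_eq_zero_or_eq_one t) with h | h <;> simp [h]
  have hcard : Fintype.card ι * h ≤ 1 := by linarith [hT.step_mul_card_le]
  exact sub_nonneg.2 <| mul_le_one₀ (mul_le_one₀ (mul_le_one₀ hcard (by positivity) (hle C hC1))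
    (by positivity) (hle _ (by simp))) hY.1 hY.2

theorem sqrt_sqDev_vel_succ_le [LinearOrder ι] (hT : CSTrajectory h α ζ X V) {c : E}
    (hc : ∑ i, (V 0 i - c) = 0) {C : ℝ} (hC1 : 1 ≤ C)
    (hC : ∀ i j, 1 + ‖X 0 i - X 0 j‖ + 2 * h * √(sqDev c (V 0)) ≤ C) (t : ℕ) :
    √(sqDev c (V (t + 1))) ≤
      (1 - Fintype.card ι * h * C ^ (-α) * (1 + t) ^ (-α) * allLinks (ζ t)) *
        √(sqDev c (V t)) := by
  have hα := hT.exponent_nonneg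
  have hnn := hT.contraction_factor_nonneg hC1 t
  rcases allLinks_eq_zero_or_eq_one (hT.link_eq_zero_or_eq_one t) with h0 | h1
  · rw [h0, mul_zero, sub_zero, one_mul]
    exact Real.sqrt_le_sqrt (hT.sqDev_vel_succ_le c t)
  have hsplit : C ^ (-α) * (1 + t : ℝ) ^ (-α) = (C * (1 + t)) ^ (-α) :=
    (Real.mul_rpow (by linarith) (by positivity)).symm
  rw [h1, mul_one, mul_assoc _ (C ^ (-α)), hsplit] at hnn ⊢
  have hb1 : (C * (1 + t)) ^ (-α) ≤ 1 :=
    Real.rpow_le_one_of_one_le_of_nonpos (by nlinarith) (neg_nonpos.2 hα)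
  -- the positions spread at most linearly, so active links keep a weight `(C * (1 + t)) ^ (-α)`
  have hlower : ∀ i j, i ≠ j → (C * (1 + t)) ^ (-α) ≤ csWeight α (ζ t) (X t) i j := by
    intro i j hij
    rw [csWeight, eq_one_of_allLinks_eq_one (hT.link_eq_zero_or_eq_one t) (hT.link_symm t) h1 hij,
      one_mul]
    refine Real.rpow_le_rpow_of_nonpos (by positivity) ?_ (neg_nonpos.2 hα)
    have hK : 2 * h * √(sqDev c (V 0)) ≤ C := by linarith [hC i j, norm_nonneg (X 0 i - X 0 j)]
    have hK0 : 0 ≤ 2 * h * √(sqDev c (V 0)) := by have := hT.step_nonneg; positivity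
    nlinarith [hT.norm_pos_sub_le c t i j, hC i j, mul_le_mul_of_nonneg_left hK t.cast_nonneg]
  have hsum : ∑ i, (V t i - c) = 0 := by
    rw [sum_sub_distrib, hT.sum_vel, ← sum_sub_distrib, hc]
  have hstep := sqDev_csStep_le_mul hT.step_nonneg hT.step_mul_card_le (hT.weight_le_one t)
    (hT.weight_symm t) hlower hb1 hsum
  rw [← hT.vel_succ] at hstep
  calc √(sqDev c (V (t + 1)))
      ≤ √((1 - Fintype.card ι * h * (C * (1 + t)) ^ (-α)) ^ 2 * sqDev c (V t)) :=
        Real.sqrt_le_sqrt hstep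
    _ = _ := by rw [Real.sqrt_mul (sq_nonneg _), Real.sqrt_sq hnn]

theorem sqrt_sqDev_vel_le_mul_prod [LinearOrder ι] (hT : CSTrajectory h α ζ X V) {c : E}
    (hc : ∑ i, (V 0 i - c) = 0) {C : ℝ} (hC1 : 1 ≤ C)
    (hC : ∀ i j, 1 + ‖X 0 i - X 0 j‖ + 2 * h * √(sqDev c (V 0)) ≤ C) (t : ℕ) :
    √(sqDev c (V t)) ≤ √(sqDev c (V 0)) *
      ∏ s ∈ range t, (1 - Fintype.card ι * h * C ^ (-α) * (1 + s) ^ (-α) * allLinks (ζ s)) := by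
  simpa using discrete_gronwall_prod_general (u := fun t => √(sqDev c (V t))) (b := 0)
    (fun s _ => by simpa using hT.sqrt_sqDev_vel_succ_le hc hC1 hC s)
    (fun s _ => hT.contraction_factor_nonneg hC1 s) (Nat.zero_le t)

end CSTrajectory

end Trajectory

theorem summable_exp_neg_mul_rpow {c ε : ℝ} (hc : 0 < c) (hε : 0 < ε) :
    Summable fun n : ℕ => Real.exp (-c * (n : ℝ) ^ ε) := by
  refine summable_of_isBigO_nat (Real.summable_nat_rpow.2 (by norm_num : (-2 : ℝ) < -1)) ?_
  refine ((isLittleO_exp_neg_mul_rpow_atTop hc (-2 / ε)).comp_tendsto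
    ((tendsto_rpow_atTop hε).comp tendsto_natCast_atTop_atTop)).isBigO.congr_right fun n => ?_
  simp only [Function.comp_apply, ← Real.rpow_mul (Nat.cast_nonneg n)]
  congr 1
  field_simp

theorem rpow_one_sub_le_two_mul_sum_rpow_neg {α : ℝ} (hα0 : 0 ≤ α) (hα1 : α < 1) (t : ℕ) :
    (t : ℝ) ^ (1 - α) ≤ 2 * ∑ s ∈ range t, (1 + s : ℝ) ^ (-α) := by
  rcases Nat.eq_zero_or_pos t with rfl | ht
  · simp [Real.zero_rpow (by linarith : 1 - α ≠ 0)]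
  have ht0 : (0 : ℝ) < t := by exact_mod_cast ht
  -- every term is at least `(1 + t) ^ (-α) ≥ (2 * t) ^ (-α) ≥ t ^ (-α) / 2`
  have hterm : (t : ℝ) ^ (-α) ≤ 2 * (1 + t : ℝ) ^ (-α) := by
    have htwo : (2 : ℝ) ^ (-α) * (t : ℝ) ^ (-α) ≤ (1 + t : ℝ) ^ (-α) := by
      rw [← Real.mul_rpow (by norm_num) ht0.le]
      exact Real.rpow_le_rpow_of_nonpos (by positivity)
        (by linarith [show (1 : ℝ) ≤ t by exact_mod_cast ht]) (by linarith)
    have hhalf : (1 / 2 : ℝ) ≤ (2 : ℝ) ^ (-α) := by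
      calc (1 / 2 : ℝ) = 2 ^ (-1 : ℝ) := by norm_num
        _ ≤ 2 ^ (-α) := Real.rpow_le_rpow_of_exponent_le (by norm_num) (by linarith)
    nlinarith [Real.rpow_nonneg ht0.le (-α)]
  calc (t : ℝ) ^ (1 - α) = t * (t : ℝ) ^ (-α) := by
        rw [sub_eq_add_neg, Real.rpow_add ht0, Real.rpow_one]
    _ ≤ t * (2 * (1 + t : ℝ) ^ (-α)) := by gcongr
    _ = 2 * ∑ _s ∈ range t, (1 + t : ℝ) ^ (-α) := by simp; ring
    _ ≤ 2 * ∑ s ∈ range t, (1 + s : ℝ) ^ (-α) := by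
      gcongr 2 * ?_
      refine sum_le_sum fun s hs => Real.rpow_le_rpow_of_nonpos (by positivity) ?_ (by linarith)
      gcongr
      exact_mod_cast (mem_range.1 hs).le

theorem prod_one_sub_le_exp_neg_sum {ι : Type*} (T : Finset ι) {x : ι → ℝ}
    (hx : ∀ i ∈ T, x i ≤ 1) : ∏ i ∈ T, (1 - x i) ≤ Real.exp (-∑ i ∈ T, x i) := by
  rw [← sum_neg_distrib, Real.exp_sum]
  exact prod_le_prod (fun i hi => sub_nonneg.2 (hx i hi)) fun i _ => Real.one_sub_le_exp_neg _

theorem prod_range_one_sub_mul_rpow_neg_le_exp {a α : ℝ} (ha0 : 0 ≤ a) (ha1 : a ≤ 1)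
    (hα0 : 0 ≤ α) (hα1 : α < 1) (t : ℕ) :
    ∏ s ∈ range t, (1 - a * (1 + s : ℝ) ^ (-α)) ≤ Real.exp (-(a / 2) * (t : ℝ) ^ (1 - α)) := by
  calc ∏ s ∈ range t, (1 - a * (1 + s : ℝ) ^ (-α))
      ≤ Real.exp (-∑ s ∈ range t, a * (1 + s : ℝ) ^ (-α)) :=
        prod_one_sub_le_exp_neg_sum _ fun s _ => mul_le_one₀ ha1 (by positivity)
          (Real.rpow_le_one_of_one_le_of_nonpos (by simp) (by linarith))
    _ ≤ _ := by
        rw [Real.exp_le_exp, ← mul_sum]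
        nlinarith [rpow_one_sub_le_two_mul_sum_rpow_neg hα0 hα1 t]

section Probability

variable {Ω : Type*} [MeasurableSpace Ω] {P : Measure Ω}

theorem ProbabilityTheory.iIndepFun.integral_prod_comp_blocks {σ τ β : Type*} [Fintype τ]
    [MeasurableSpace β] {ζ : σ × τ → Ω → β} (hζ : iIndepFun ζ P) (hmeas : ∀ q, Measurable (ζ q))
    {φ : σ → (τ → β) → ℝ} (hφ : ∀ s, Measurable (φ s)) (T : Finset σ) :
    ∫ ω, ∏ s ∈ T, φ s (fun j => ζ (s, j) ω) ∂P = ∏ s ∈ T, ∫ ω, φ s (fun j => ζ (s, j) ω) ∂P := by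
  classical
  have := hζ.isProbabilityMeasure
  have hblock : ∀ s, Measurable fun ω => φ s (fun j => ζ (s, j) ω) := fun s =>
    (hφ s).comp (measurable_pi_lambda _ fun j => hmeas (s, j))
  induction T using Finset.induction_on with
  | empty => simp
  | insert a T ha ih =>
    have hdisj : Disjoint (T ×ˢ (univ : Finset τ)) ({a} ×ˢ univ) := by
      simp only [disjoint_left, mem_product, mem_singleton, mem_univ, and_true]
      rintro ⟨s, j⟩ hs rfl; exact ha hs
    -- the factors for `s ∈ T` and for `a` are functions of disjoint subfamilies of `ζ`
    have hind : IndepFun (fun ω => ∏ s ∈ T, φ s (fun j => ζ (s, j) ω))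
        (fun ω => φ a (fun j => ζ (a, j) ω)) P := by
      have hprod : (fun ω => ∏ s ∈ T, φ s (fun j => ζ (s, j) ω))
          = fun ω => ∏ s ∈ T.attach, φ s (fun j => ζ (s, j) ω) :=
        funext fun ω => (prod_attach T fun s => φ s (fun j => ζ (s, j) ω)).symm
      rw [hprod]
      exact (hζ.indepFun_finset _ _ hdisj hmeas).comp
        (φ := fun x => ∏ s ∈ T.attach, φ s (fun j => x ⟨(s, j), by simp⟩))
        (ψ := fun x => φ a (fun j => x ⟨(a, j), by simp⟩))
        (Finset.measurable_prod _ fun s _ => (hφ s).comp <|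
          measurable_pi_lambda _ fun j => measurable_pi_apply _)
        ((hφ a).comp <| measurable_pi_lambda _ fun j => measurable_pi_apply _)
    calc ∫ ω, ∏ s ∈ insert a T, φ s (fun j => ζ (s, j) ω) ∂P
        = ∫ ω, (∏ s ∈ T, φ s (fun j => ζ (s, j) ω)) * φ a (fun j => ζ (a, j) ω) ∂P := by
          congr 1; funext ω; rw [prod_insert ha, mul_comm]
      _ = _ := hind.integral_fun_mul_eq_mul_integral
          (Finset.measurable_prod T fun s _ => hblock s).aestronglyMeasurable
          (hblock a).aestronglyMeasurable
      _ = ∏ s ∈ insert a T, ∫ ω, φ s (fun j => ζ (s, j) ω) ∂P := by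
          rw [prod_insert ha, ih, mul_comm]

theorem ProbabilityTheory.iIndepFun.integral_prod_one_sub_mul_prod {σ τ : Type*} [Fintype τ]
    {ζ : σ × τ → Ω → ℝ} (hζ : iIndepFun ζ P) (hmeas : ∀ q, Measurable (ζ q))
    (hbdd : ∀ q ω, ‖ζ q ω‖ ≤ 1) (β : σ → ℝ) (T : Finset σ) :
    ∫ ω, ∏ s ∈ T, (1 - β s * ∏ j, ζ (s, j) ω) ∂P
      = ∏ s ∈ T, (1 - β s * ∏ j, ∫ ω, ζ (s, j) ω ∂P) := by
  have := hζ.isProbabilityMeasure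
  rw [hζ.integral_prod_comp_blocks hmeas (φ := fun s y => 1 - β s * ∏ j, y j) (by fun_prop)]
  refine prod_congr rfl fun s _ => ?_
  have hY : Integrable (fun ω => ∏ j, ζ (s, j) ω) P :=
    .of_bound (Finset.measurable_prod _ fun j _ => hmeas (s, j)).aestronglyMeasurable 1 <|
      .of_forall fun ω => by
        rw [norm_prod]; exact prod_le_one (fun _ _ => norm_nonneg _) fun j _ => hbdd _ ω
  rw [integral_sub (integrable_const 1) (hY.const_mul _), integral_const_mul, integral_const,
    probReal_univ, one_smul,
    (hζ.precomp (Prod.mk_right_injective s)).integral_fun_prod_eq_prod_integral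
      fun j => (hmeas _).aestronglyMeasurable]

theorem integral_eq_of_eq_zero_or_eq_one {f : Ω → ℝ} (hf : Measurable f)
    (h01 : ∀ ω, f ω = 0 ∨ f ω = 1) {r : ℝ} (hr : 0 ≤ r)
    (h1 : P {ω | f ω = 1} = ENNReal.ofReal r) : ∫ ω, f ω ∂P = r := by
  have hind : f = {ω | f ω = 1}.indicator 1 := funext fun ω => by
    rcases h01 ω with h | h <;> simp [Set.indicator, h]
  conv_lhs => rw [hind]
  rw [integral_indicator_one (s := {ω | f ω = 1}) (hf (measurableSet_singleton 1)),
    measureReal_def, h1, ENNReal.toReal_ofReal hr]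

theorem ae_summable_norm_of_summable_integral_norm {ι E : Type*} [Countable ι]
    [NormedAddCommGroup E] {f : ι → Ω → E} (hf : ∀ n, Integrable (f n) P)
    (hsum : Summable fun n => ∫ ω, ‖f n ω‖ ∂P) : ∀ᵐ ω ∂P, Summable fun n => ‖f n ω‖ := by
  refine summable_norm_of_tsum_eLpNorm_ne_top le_rfl (fun n => (hf n).aestronglyMeasurable) ?_
  simp_rw [eLpNorm_one_eq_lintegral_enorm, ← ofReal_integral_norm_eq_lintegral_enorm (hf _),
    ← ENNReal.ofReal_tsum_of_nonneg (fun n => integral_nonneg fun _ => norm_nonneg _) hsum]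
  exact ENNReal.ofReal_ne_top

theorem ae_summable_prod_range_one_sub_mul {τ : Type*} [Fintype τ] {ζ : ℕ × τ → Ω → ℝ}
    (hζ : iIndepFun ζ P) (hmeas : ∀ q, Measurable (ζ q))
    (hζ01 : ∀ q ω, ζ q ω ∈ Set.Icc (0 : ℝ) 1) {r : ℝ} (hr : 0 < r)
    (hmean : ∀ q, ∫ ω, ζ q ω ∂P = r) {κ α : ℝ} (hκ0 : 0 < κ) (hκ1 : κ ≤ 1)
    (hα0 : 0 ≤ α) (hα1 : α < 1) :
    ∀ᵐ ω ∂P, Summable fun t : ℕ =>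
      ∏ s ∈ range t, (1 - κ * (1 + s) ^ (-α) * ∏ j, ζ (s, j) ω) := by
  have := hζ.isProbabilityMeasure
  have hbdd : ∀ q ω, ‖ζ q ω‖ ≤ 1 := fun q ω => by
    rw [Real.norm_of_nonneg (hζ01 q ω).1]; exact (hζ01 q ω).2
  set G : ℕ → Ω → ℝ := fun t ω => ∏ s ∈ range t, (1 - κ * (1 + s) ^ (-α) * ∏ j, ζ (s, j) ω)
  have hG : ∀ t ω, G t ω ∈ Set.Icc (0 : ℝ) 1 := fun t ω => by
    have hY : ∀ s, ∏ j, ζ (s, j) ω ∈ Set.Icc (0 : ℝ) 1 := fun s =>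
      ⟨prod_nonneg fun j _ => (hζ01 _ ω).1,
        prod_le_one (fun j _ => (hζ01 _ ω).1) fun j _ => (hζ01 _ ω).2⟩
    have hβ : ∀ s : ℕ, κ * (1 + s : ℝ) ^ (-α) ∈ Set.Icc (0 : ℝ) 1 := fun s =>
      ⟨by positivity, mul_le_one₀ hκ1 (by positivity)
        (Real.rpow_le_one_of_one_le_of_nonpos (by simp) (by linarith))⟩
    have hfac0 : ∀ s : ℕ, 0 ≤ 1 - κ * (1 + s : ℝ) ^ (-α) * ∏ j, ζ (s, j) ω := fun s =>
      sub_nonneg.2 (mul_le_one₀ (hβ s).2 (hY s).1 (hY s).2)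
    exact ⟨prod_nonneg fun s _ => hfac0 s, prod_le_one (fun s _ => hfac0 s)
      fun s _ => sub_le_self _ (mul_nonneg (hβ s).1 (hY s).1)⟩
  have hGint : ∀ t, Integrable (G t) P := fun t =>
    .of_bound (by fun_prop) 1 (.of_forall fun ω => by
      rw [Real.norm_of_nonneg (hG t ω).1]; exact (hG t ω).2)
  -- `p` is the mean of each block product `∏ j, ζ (s, j)`
  set p := r ^ Fintype.card τ
  have hp1 : p ≤ 1 := by
    have hint1 : ∀ q, ∫ ω, ζ q ω ∂P ≤ 1 := fun q => (le_abs_self _).trans <| by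
      simpa using norm_integral_le_of_norm_le_const (μ := P) (.of_forall (hbdd q))
    calc p = ∏ _j : τ, r := by simp [p]
      _ ≤ 1 := prod_le_one (fun _ _ => hr.le) fun j _ => hmean (0, j) ▸ hint1 (0, j)
  have hbound : ∀ t, ∫ ω, ‖G t ω‖ ∂P ≤ Real.exp (-(κ * p / 2) * (t : ℝ) ^ (1 - α)) := fun t => by
    rw [integral_congr_ae (.of_forall fun ω => Real.norm_of_nonneg (hG t ω).1),
      hζ.integral_prod_one_sub_mul_prod hmeas hbdd _]
    simp only [hmean, prod_const, card_univ]
    simpa only [mul_right_comm κ] using prod_range_one_sub_mul_rpow_neg_le_exp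
      (by positivity : 0 ≤ κ * p) (mul_le_one₀ hκ1 (by positivity) hp1) hα0 hα1 t
  have hsum : Summable fun t => ∫ ω, ‖G t ω‖ ∂P :=
    (summable_exp_neg_mul_rpow (by positivity) (by linarith)).of_nonneg_of_le
      (fun t => integral_nonneg fun _ => norm_nonneg _) hbound
  filter_upwards [ae_summable_norm_of_summable_integral_norm hGint hsum] with ω hω
  exact hω.of_norm

end Probability

theorem stmt13_general (k : ℕ) (h : ℝ) (hh0 : 0 < h) (hhk : h ≤ 1 / k)
    (α : ℝ) (hα0 : 0 ≤ α) (hα1 : α < 1) (lam : ℝ) (hlam1 : lam < 1)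
    (Ω : Type*) [MeasurableSpace Ω] (P : Measure Ω)
    (ζ : ℕ → Fin k → Fin k → Ω → ℝ)
    (hζmeas : ∀ t i j, Measurable (ζ t i j))
    (hζsymm : ∀ t i j, ζ t i j = ζ t j i)
    (hζval : ∀ t i j ω, ζ t i j ω = 0 ∨ ζ t i j ω = 1)
    (hζform : ∀ t i j, i ≠ j → P {ω | ζ t i j ω = 1} = ENNReal.ofReal (1 - lam))
    (hζindep : iIndepFun
      (fun q : ℕ × {p : Fin k × Fin k // p.1 < p.2} => ζ q.1 q.2.1.1 q.2.1.2) P)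
    (X V : ℕ → Ω → Fin k → EuclideanSpace ℝ (Fin 3))
    (X0 V0 : Fin k → EuclideanSpace ℝ (Fin 3))
    (hX0 : ∀ ω, X 0 ω = X0) (hV0 : ∀ ω, V 0 ω = V0)
    (hdynX : ∀ t ω i, X (t + 1) ω i = X t ω i + h • V t ω i)
    (hdynV : ∀ t ω i, V (t + 1) ω i = V t ω i +
      h • ∑ j, (ζ t i j ω * (1 + ‖X t ω i - X t ω j‖) ^ (-α)) •
        (V t ω j - V t ω i)) :
    ∀ᵐ ω ∂P,
      Summable fun t : ℕ =>
        Real.sqrt (∑ i, ‖V t ω i - (k : ℝ)⁻¹ • ∑ j, V0 j‖ ^ 2) := by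
  -- `1 / 0 = 0`, so `0 < h ≤ 1 / k` rules out `k = 0`
  have hk0 : (0 : ℝ) < k := Nat.cast_pos.2 <| Nat.pos_of_ne_zero fun hk => by
    simp [hk] at hhk; linarith
  have hkh : k * h ≤ 1 := by rw [le_div_iff₀ hk0] at hhk; linarith
  set c : EuclideanSpace ℝ (Fin 3) := (k : ℝ)⁻¹ • ∑ j, V0 j
  obtain ⟨M, hM⟩ := Finite.exists_le fun p : Fin k × Fin k =>
    1 + ‖X0 p.1 - X0 p.2‖ + 2 * h * √(sqDev c V0)
  have hT : ∀ ω, CSTrajectory h α (fun t i j => ζ t i j ω) (fun t => X t ω) (fun t => V t ω) :=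
    fun ω =>
    { step_nonneg := hh0.le
      step_mul_card_le := by rw [Fintype.card_fin, mul_comm]; exact hkh
      exponent_nonneg := hα0
      link_eq_zero_or_eq_one := fun t i j => hζval t i j ω
      link_symm := fun t i j => by rw [hζsymm]
      pos_succ := fun t i => hdynX t ω i
      vel_succ := fun t => funext fun i => hdynV t ω i }
  have hpath := fun ω t => (hT ω).sqrt_sqDev_vel_le_mul_prod (c := c)
    (by simpa [hV0] using sum_sub_mean_eq_zero V0) (le_max_right M 1)
    (fun i j => by rw [hX0, hV0]; exact (hM (i, j)).trans (le_max_left M 1)) t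
  have hκ1 : k * h * max M 1 ^ (-α) ≤ 1 := mul_le_one₀ hkh (by positivity)
    (Real.rpow_le_one_of_one_le_of_nonpos (le_max_right M 1) (by linarith))
  filter_upwards [ae_summable_prod_range_one_sub_mul hζindep (fun q => hζmeas _ _ _)
    (fun q ω => by rcases hζval q.1 q.2.1.1 q.2.1.2 ω with h | h <;> simp [h])
    (by linarith : 0 < 1 - lam) (fun q => integral_eq_of_eq_zero_or_eq_one (hζmeas _ _ _)
      (hζval _ _ _) (by linarith) (hζform _ _ _ q.2.2.ne)) (by positivity) hκ1 hα0 hα1] with ω hω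
  refine (hω.mul_left (√(sqDev c V0))).of_nonneg_of_le (fun t => Real.sqrt_nonneg _) fun t => ?_
  have := hpath ω t
  rw [hV0, Fintype.card_fin] at this
  exact this

/-- **Summability of relative velocities for the Cucker–Smale model with random
failures, sub-linear case.** Under the Cucker–Smale dynamics with time step
`0 < h ≤ 1/k`, weights `a_{ij}(t) = ζ^{ij}_t (1 + ‖X_i − X_j‖)^(−α)` with
`0 ≤ α < 1`, and i.i.d. Bernoulli(1−λ) failure variables `ζ^{ij}_t` (symmetric in
`(i,j)`, independent over unordered pairs of distinct agents and time steps),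
almost surely `Σ_t ‖v[t]‖ < ∞`, where `v[t]` is the velocity vector relative to
the initial mean velocity and the norm is the Euclidean norm on `(ℝ³)^k`. -/
theorem stmt13 (k : ℕ) (hk : 2 ≤ k) (h : ℝ) (hh0 : 0 < h) (hhk : h ≤ 1 / k)
    (α : ℝ) (hα0 : 0 ≤ α) (hα1 : α < 1) (lam : ℝ) (hlam0 : 0 < lam) (hlam1 : lam < 1)
    (Ω : Type*) [MeasurableSpace Ω] (P : Measure Ω) [IsProbabilityMeasure P]
    (ζ : ℕ → Fin k → Fin k → Ω → ℝ)
    (hζmeas : ∀ t i j, Measurable (ζ t i j))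
    (hζsymm : ∀ t i j, ζ t i j = ζ t j i)
    (hζval : ∀ t i j ω, ζ t i j ω = 0 ∨ ζ t i j ω = 1)
    (hζform : ∀ t i j, i ≠ j → P {ω | ζ t i j ω = 1} = ENNReal.ofReal (1 - lam))
    (hζfail : ∀ t i j, i ≠ j → P {ω | ζ t i j ω = 0} = ENNReal.ofReal lam)
    (hζindep : iIndepFun
      (fun q : ℕ × {p : Fin k × Fin k // p.1 < p.2} => ζ q.1 q.2.1.1 q.2.1.2) P)
    (X V : ℕ → Ω → Fin k → EuclideanSpace ℝ (Fin 3))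
    (X0 V0 : Fin k → EuclideanSpace ℝ (Fin 3))
    (hX0 : ∀ ω, X 0 ω = X0) (hV0 : ∀ ω, V 0 ω = V0)
    (hdynX : ∀ t ω i, X (t + 1) ω i = X t ω i + h • V t ω i)
    (hdynV : ∀ t ω i, V (t + 1) ω i = V t ω i +
      h • ∑ j, (ζ t i j ω * (1 + ‖X t ω i - X t ω j‖) ^ (-α)) •
        (V t ω j - V t ω i)) :
    ∀ᵐ ω ∂P,
      Summable fun t : ℕ =>
        Real.sqrt (∑ i, ‖V t ω i - (k : ℝ)⁻¹ • ∑ j, V0 j‖ ^ 2) :=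
  stmt13_general k h hh0 hhk α hα0 hα1 lam hlam1 Ω P ζ hζmeas hζsymm hζval hζform hζindep X V X0 V0
    hX0 hV0 hdynX hdynV
end
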